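/- arXiv:2508.21661 — 2 statements merged into one kernel-verified Lean document; each statement's English description precedes it below -/
import Mathlib

section
/- Let V be a real inner product space of finite dimension n ≥ 4 and let R be an algebraic curvature tensor on V. If for every orthonormal four-frame {e₁,e₂,e₃,e₄} in V one has R(e₁,e₃,e₁,e₃) + R(e₁,e₄,e₁,e₄) + R(e₂,e₃,e₂,e₃) + R(e₂,e₄,e₂,e₄) ≥ (1/2)·(R(e₁,e₂,e₁,e₂) + R(e₃,e₄,e₃,e₄)), then R has nonnegative isotropic curvature, i.e. for every orthonormal four-frame {e₁,e₂,e₃,e₄} in V one has R(e₁,e₃,e₁,e₃) + R(e₁,e₄,e₁,e₄) + R(e₂,e₃,e₂,e₃) + R(e₂,e₄,e₂,e₄) − 2·R(e₁,e₂,e₃,e₄) ≥ 0. -/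
open scoped RealInnerProductSpace

variable {V : Type*} [NormedAddCommGroup V] [InnerProductSpace ℝ V]

/-- An algebraic curvature tensor on a real inner product space `V`:
an `ℝ`-multilinear map `V × V × V × V → ℝ` with the standard symmetries and
the first Bianchi identity. -/
def IsCurvatureTensor (R : V →ₗ[ℝ] V →ₗ[ℝ] V →ₗ[ℝ] V →ₗ[ℝ] ℝ) : Prop :=
  (∀ X Y Z W : V, R X Y Z W = - R Y X Z W) ∧
  (∀ X Y Z W : V, R X Y Z W = - R X Y W Z) ∧
  (∀ X Y Z W : V, R X Y Z W = R Z W X Y) ∧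
  (∀ X Y Z W : V, R X Y Z W + R X Z W Y + R X W Y Z = 0)

/-- An orthonormal four-frame: four pairwise orthogonal unit vectors. -/
def OrthonormalFrame4 (e₁ e₂ e₃ e₄ : V) : Prop :=
  ‖e₁‖ = 1 ∧ ‖e₂‖ = 1 ∧ ‖e₃‖ = 1 ∧ ‖e₄‖ = 1 ∧
  ⟪e₁, e₂⟫ = 0 ∧ ⟪e₁, e₃⟫ = 0 ∧ ⟪e₁, e₄⟫ = 0 ∧
  ⟪e₂, e₃⟫ = 0 ∧ ⟪e₂, e₄⟫ = 0 ∧ ⟪e₃, e₄⟫ = 0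

/-! The hypothesis is applied to `(e₁, e₂, e₃, e₄)` and to its rotations by 45° in the planes
`⟨e₁, e₃⟩, ⟨e₂, e₄⟩`, resp. `⟨e₁, e₄⟩, ⟨e₂, e₃⟩`. Up to the factor `√2` these are
`(e₁ + e₃, e₂ + e₄, e₁ - e₃, e₂ - e₄)` and `(e₁ + e₄, e₂ - e₃, e₁ - e₄, e₂ + e₃)`, the second being
the first one built from the frame `(e₁, e₂, e₄, -e₃)`. Expanding by multilinearity, the symmetries
of `R` and the first Bianchi identity, the pinching defects of these two quadruples plus four times
that of `(e₁, e₂, e₃, e₄)` add up to nine times its isotropic curvature. -/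

/-- `map_sub` does not fire on the first argument: synthesizing `AddCommGroup` on the space of
trilinear forms exceeds the default `maxSynthPendingDepth`. -/
theorem apply_sub_left (R : V →ₗ[ℝ] V →ₗ[ℝ] V →ₗ[ℝ] V →ₗ[ℝ] ℝ) (X Y Z W U : V) :
    R (X - Y) Z W U = R X Z W U - R Y Z W U := by
  rw [sub_eq_add_neg, ← neg_one_smul ℝ Y, map_add, map_smul]
  simp only [LinearMap.add_apply, LinearMap.smul_apply, smul_eq_mul]
  ring

namespace IsCurvatureTensor

variable {R : V →ₗ[ℝ] V →ₗ[ℝ] V →ₗ[ℝ] V →ₗ[ℝ] ℝ}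

theorem apply_self_left (hR : IsCurvatureTensor R) (X Z W : V) : R X X Z W = 0 := by
  linarith [hR.1 X X Z W]

theorem apply_self_right (hR : IsCurvatureTensor R) (X Y Z : V) : R X Y Z Z = 0 := by
  linarith [hR.2.1 X Y Z Z]

theorem apply_swap_swap (hR : IsCurvatureTensor R) (X Y : V) : R Y X Y X = R X Y X Y := by
  rw [hR.1, hR.2.1, neg_neg]

theorem apply_add_sub (hR : IsCurvatureTensor R) (X Y : V) :
    R (X + Y) (X - Y) (X + Y) (X - Y) = 4 * R X Y X Y := by
  simp only [map_add, map_sub, LinearMap.add_apply, LinearMap.sub_apply, hR.apply_self_left,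
    hR.apply_self_right]
  linear_combination -hR.2.1 X Y Y X - hR.1 Y X X Y + hR.apply_swap_swap X Y

end IsCurvatureTensor

theorem apply_add_add_add_apply_sub_sub {R : V →ₗ[ℝ] V →ₗ[ℝ] V →ₗ[ℝ] V →ₗ[ℝ] ℝ}
    (hR : ∀ X Y Z W : V, R X Y Z W = R Z W X Y) (X Y Z W : V) :
    R (X + Y) (Z + W) (X + Y) (Z + W) + R (X - Y) (Z - W) (X - Y) (Z - W) =
      2 * (R X Z X Z + R X W X W + R Y Z Y Z + R Y W Y W) + 4 * R X Z Y W + 4 * R X W Y Z := by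
  simp only [map_add, map_sub, apply_sub_left, LinearMap.add_apply, LinearMap.sub_apply]
  linear_combination 2 * hR Y Z X W + 2 * hR Y W X Z

theorem apply_add_sub_add_apply_sub_add {R : V →ₗ[ℝ] V →ₗ[ℝ] V →ₗ[ℝ] V →ₗ[ℝ] ℝ}
    (hR : ∀ X Y Z W : V, R X Y Z W = R Z W X Y) (X Y Z W : V) :
    R (X + Y) (Z - W) (X + Y) (Z - W) + R (X - Y) (Z + W) (X - Y) (Z + W) =
      2 * (R X Z X Z + R X W X W + R Y Z Y Z + R Y W Y W) - 4 * R X Z Y W - 4 * R X W Y Z := by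
  have h := apply_add_add_add_apply_sub_sub hR X Y Z (-W)
  simp only [← sub_eq_add_neg, sub_neg_eq_add, map_neg, LinearMap.neg_apply, neg_neg] at h
  linear_combination h

section PinchingDefect

variable (R : V →ₗ[ℝ] V →ₗ[ℝ] V →ₗ[ℝ] V →ₗ[ℝ] ℝ)

noncomputable def pinchingDefect (e₁ e₂ e₃ e₄ : V) : ℝ :=
  R e₁ e₃ e₁ e₃ + R e₁ e₄ e₁ e₄ + R e₂ e₃ e₂ e₃ + R e₂ e₄ e₂ e₄ -
    (1 / 2) * (R e₁ e₂ e₁ e₂ + R e₃ e₄ e₃ e₄)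

def isotropicCurvature (e₁ e₂ e₃ e₄ : V) : ℝ :=
  R e₁ e₃ e₁ e₃ + R e₁ e₄ e₁ e₄ + R e₂ e₃ e₂ e₃ + R e₂ e₄ e₂ e₄ - 2 * R e₁ e₂ e₃ e₄

theorem pinchingDefect_smul (t : ℝ) (e₁ e₂ e₃ e₄ : V) :
    pinchingDefect R (t • e₁) (t • e₂) (t • e₃) (t • e₄) = t ^ 4 * pinchingDefect R e₁ e₂ e₃ e₄ := by
  simp only [pinchingDefect, map_smul, LinearMap.smul_apply, smul_eq_mul]
  ring

variable {R}

theorem IsCurvatureTensor.pinchingDefect_add_sub (hR : IsCurvatureTensor R) (a b c d : V) :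
    pinchingDefect R (a + c) (b + d) (a - c) (b - d) =
      4 * (R a c a c + R b d b d) + (R a b a b + R a d a d + R c b c b + R c d c d) -
        6 * R a b c d - 6 * R a d c b := by
  have hac := hR.apply_add_sub a c
  have hbd := hR.apply_add_sub b d
  have hsum := apply_add_add_add_apply_sub_sub hR.2.2.1 a c b d
  have hdiff := apply_add_sub_add_apply_sub_add hR.2.2.1 a c b d
  have hswap := hR.apply_swap_swap (a - c) (b + d)
  unfold pinchingDefect
  linarith

theorem IsCurvatureTensor.nine_mul_isotropicCurvature (hR : IsCurvatureTensor R) (a b c d : V) :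
    9 * isotropicCurvature R a b c d =
      pinchingDefect R (a + c) (b + d) (a - c) (b - d) +
        pinchingDefect R (a + d) (b - c) (a - d) (b + c) + 4 * pinchingDefect R a b c d := by
  have hB := hR.pinchingDefect_add_sub a b c d
  have hC := hR.pinchingDefect_add_sub a b d (-c)
  simp only [← sub_eq_add_neg, sub_neg_eq_add, map_neg, LinearMap.neg_apply, neg_neg,
    mul_neg] at hC
  have hbc := hR.apply_swap_swap b c
  have hbd := hR.apply_swap_swap b d
  have hcd := hR.apply_swap_swap c d
  have habdc := hR.2.1 a b d c
  have hadcb := hR.2.1 a d c b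
  have hbianchi := hR.2.2.2 a b c d
  unfold isotropicCurvature pinchingDefect at *
  linarith

end PinchingDefect

theorem norm_inv_sqrt_two_smul_add {x y : V} (hx : ‖x‖ = 1) (hy : ‖y‖ = 1) (hxy : ⟪x, y⟫ = 0) :
    ‖(√2)⁻¹ • (x + y)‖ = 1 := by
  rw [norm_smul, norm_add_eq_sqrt_iff_real_inner_eq_zero.mpr hxy, hx, hy, norm_inv,
    Real.norm_of_nonneg (Real.sqrt_nonneg 2)]
  norm_num

theorem norm_inv_sqrt_two_smul_sub {x y : V} (hx : ‖x‖ = 1) (hy : ‖y‖ = 1) (hxy : ⟪x, y⟫ = 0) :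
    ‖(√2)⁻¹ • (x - y)‖ = 1 := by
  rw [norm_smul, norm_sub_eq_sqrt_iff_real_inner_eq_zero.mpr hxy, hx, hy, norm_inv,
    Real.norm_of_nonneg (Real.sqrt_nonneg 2)]
  norm_num

namespace OrthonormalFrame4

variable {a b c d : V}

theorem add_sub (h : OrthonormalFrame4 a b c d) :
    OrthonormalFrame4 ((√2)⁻¹ • (a + c)) ((√2)⁻¹ • (b + d)) ((√2)⁻¹ • (a - c))
      ((√2)⁻¹ • (b - d)) := by
  obtain ⟨ha, hb, hc, hd, hab, hac, had, hbc, hbd, hcd⟩ := h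
  refine ⟨norm_inv_sqrt_two_smul_add ha hc hac, norm_inv_sqrt_two_smul_add hb hd hbd,
    norm_inv_sqrt_two_smul_sub ha hc hac, norm_inv_sqrt_two_smul_sub hb hd hbd, ?_, ?_, ?_, ?_, ?_,
    ?_⟩ <;>
  simp [real_inner_smul_left, real_inner_smul_right, inner_add_left, inner_add_right,
    inner_sub_left, inner_sub_right, real_inner_comm, *]

theorem swap_neg (h : OrthonormalFrame4 a b c d) : OrthonormalFrame4 a b d (-c) := by
  obtain ⟨ha, hb, hc, hd, hab, hac, had, hbc, hbd, hcd⟩ := h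
  exact ⟨ha, hb, hd, by rwa [norm_neg], hab, had, by simp [hac], hbd, by simp [hbc],
    by simp [real_inner_comm, hcd]⟩

end OrthonormalFrame4

theorem pinchingDefect_add_sub_nonneg {R : V →ₗ[ℝ] V →ₗ[ℝ] V →ₗ[ℝ] V →ₗ[ℝ] ℝ}
    (hR : ∀ e₁ e₂ e₃ e₄ : V, OrthonormalFrame4 e₁ e₂ e₃ e₄ → 0 ≤ pinchingDefect R e₁ e₂ e₃ e₄)
    {a b c d : V} (h : OrthonormalFrame4 a b c d) :
    0 ≤ pinchingDefect R (a + c) (b + d) (a - c) (b - d) := by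
  have hscale := pinchingDefect_smul R √2 ((√2)⁻¹ • (a + c)) ((√2)⁻¹ • (b + d))
    ((√2)⁻¹ • (a - c)) ((√2)⁻¹ • (b - d))
  simp only [smul_inv_smul₀ (Real.sqrt_ne_zero'.mpr two_pos)] at hscale
  rw [hscale]
  exact mul_nonneg (by positivity) (hR _ _ _ _ h.add_sub)

theorem stmt_1_general {V : Type*} [NormedAddCommGroup V] [InnerProductSpace ℝ V]
    (R : V →ₗ[ℝ] V →ₗ[ℝ] V →ₗ[ℝ] V →ₗ[ℝ] ℝ) (hR : IsCurvatureTensor R)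
    (hyp : ∀ e₁ e₂ e₃ e₄ : V, OrthonormalFrame4 e₁ e₂ e₃ e₄ →
      R e₁ e₃ e₁ e₃ + R e₁ e₄ e₁ e₄ + R e₂ e₃ e₂ e₃ + R e₂ e₄ e₂ e₄ ≥
        (1 / 2) * (R e₁ e₂ e₁ e₂ + R e₃ e₄ e₃ e₄)) :
    ∀ e₁ e₂ e₃ e₄ : V, OrthonormalFrame4 e₁ e₂ e₃ e₄ →
      R e₁ e₃ e₁ e₃ + R e₁ e₄ e₁ e₄ + R e₂ e₃ e₂ e₃ + R e₂ e₄ e₂ e₄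
        - 2 * R e₁ e₂ e₃ e₄ ≥ 0 := by
  have hdefect : ∀ e₁ e₂ e₃ e₄ : V, OrthonormalFrame4 e₁ e₂ e₃ e₄ →
      0 ≤ pinchingDefect R e₁ e₂ e₃ e₄ := fun e₁ e₂ e₃ e₄ h ↦ sub_nonneg.mpr (hyp e₁ e₂ e₃ e₄ h)
  intro e₁ e₂ e₃ e₄ h
  have hB := pinchingDefect_add_sub_nonneg hdefect h
  have hC := pinchingDefect_add_sub_nonneg hdefect h.swap_neg
  rw [← sub_eq_add_neg, sub_neg_eq_add] at hC
  have h9 := hR.nine_mul_isotropicCurvature e₁ e₂ e₃ e₄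
  change 0 ≤ isotropicCurvature R e₁ e₂ e₃ e₄
  linarith [hdefect e₁ e₂ e₃ e₄ h]

theorem stmt_1 {V : Type*} [NormedAddCommGroup V] [InnerProductSpace ℝ V]
    [FiniteDimensional ℝ V] (hdim : 4 ≤ Module.finrank ℝ V)
    (R : V →ₗ[ℝ] V →ₗ[ℝ] V →ₗ[ℝ] V →ₗ[ℝ] ℝ) (hR : IsCurvatureTensor R)
    (hyp : ∀ e₁ e₂ e₃ e₄ : V, OrthonormalFrame4 e₁ e₂ e₃ e₄ →
      R e₁ e₃ e₁ e₃ + R e₁ e₄ e₁ e₄ + R e₂ e₃ e₂ e₃ + R e₂ e₄ e₂ e₄ ≥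
        (1 / 2) * (R e₁ e₂ e₁ e₂ + R e₃ e₄ e₃ e₄)) :
    ∀ e₁ e₂ e₃ e₄ : V, OrthonormalFrame4 e₁ e₂ e₃ e₄ →
      R e₁ e₃ e₁ e₃ + R e₁ e₄ e₁ e₄ + R e₂ e₃ e₂ e₃ + R e₂ e₄ e₂ e₄
        - 2 * R e₁ e₂ e₃ e₄ ≥ 0 :=
  stmt_1_general R hR hyp
end

section
/- Let V be a real inner product space of finite dimension n ≥ 4, let R be an algebraic curvature tensor on V, let {e₁,…,e_n} be an orthonormal basis of V, and let S₀ = (1/(n(n−1)))·Σ_{i,j=1}^{n} R(e_i,e_j,e_i,e_j) be the normalized scalar curvature of R. Define γ_n = n(n−1)/(n²−n−6) if n = 4 or n ≥ 6, and γ₅ = 20/17. If for every orthonormal four-frame {f₁,f₂,f₃,f₄} in V one has R(f₁,f₂,f₁,f₂) + R(f₃,f₄,f₃,f₄) < 2γ_n·S₀, then for every orthonormal four-frame {f₁,f₂,f₃,f₄} in V one has R(f₁,f₃,f₁,f₃) + R(f₁,f₄,f₁,f₄) + R(f₂,f₃,f₂,f₃) + R(f₂,f₄,f₂,f₄) > (1/2)·(R(f₁,f₂,f₁,f₂)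 + R(f₃,f₄,f₃,f₄)). -/
/-!
Extend the frame to an orthonormal basis `(eᵢ)` and put `Kᵢⱼ = R(eᵢ, eⱼ, eᵢ, eⱼ)`,
`σ = 2 γₙ S₀`. The hypothesis says `Kᵢⱼ + Kₖₗ < σ` for any four distinct indices, while
`∑ Kᵢⱼ = n (n - 1) S₀` ties `σ` to the total sum. Write `P = K₁₂ + K₃₄`, `X = K₁₃ + K₁₄ + K₂₃ + K₂₄`
and let `O` be the remaining `m = n - 4` indices. Averaging the hypothesis over disjoint pairs of
pairs in a set of size `k ≥ 4` bounds its pair sum by `k (k - 1) σ / 2`; applied to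
`O ∪ {1, 2}` and `O ∪ {3, 4}`, together with `K₁ₓ + K₂ᵧ < σ` and `K₃ₓ + K₄ᵧ < σ` averaged over
`x ≠ y` in `O`, this bounds every term of `∑ Kᵢⱼ` except `P` and `X`, and for `n ≥ 6` the choice
of `γₙ` leaves exactly `2X > σ > P`. For `n = 4` there is nothing to bound, and for `n = 5` the
twelve constraints pairing a pair inside the frame with a pair through the fifth index give the
result for the constant `γ₅ = 20/17`.
-/

open scoped RealInnerProductSpace

variable {V : Type*} [NormedAddCommGroup V] [InnerProductSpace ℝ V]

open Finset

def DisjointPairsBound {ι : Type*} (K : ι → ι → ℝ) (σ : ℝ) : Prop :=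
  ∀ a b c d, a ≠ b → a ≠ c → a ≠ d → b ≠ c → b ≠ d → c ≠ d → K a b + K c d < σ

theorem Finset.cast_card_offDiag {ι : Type*} (s : Finset ι) :
    (#s.offDiag : ℝ) = #s * (#s - 1) := by
  rw [offDiag_card, Nat.cast_sub (Nat.le_mul_self _)]
  push_cast
  ring

section PairSums

variable {ι : Type*} [DecidableEq ι] {K : ι → ι → ℝ} {σ : ℝ}

theorem sum_add_sum_lt_card_mul {s : Finset ι} (hs : 2 ≤ #s) {f g : ι → ℝ}
    (h : ∀ x ∈ s, ∀ y ∈ s, x ≠ y → f x + g y < σ) :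
    ∑ x ∈ s, f x + ∑ x ∈ s, g x < #s * σ := by
  have hcard : ∀ x ∈ s, (#(s.erase x) : ℝ) = #s - 1 := fun x hx => by
    rw [card_erase_of_mem hx, Nat.cast_sub (by omega), Nat.cast_one]
  have hlt : ∑ x ∈ s, ∑ y ∈ s.erase x, (f x + g y) < ∑ x ∈ s, ∑ _y ∈ s.erase x, σ :=
    sum_lt_sum_of_nonempty (card_pos.1 (by omega)) fun x hx =>
      sum_lt_sum_of_nonempty (card_pos.1 (by rw [card_erase_of_mem hx]; omega)) fun y hy =>
        h x hx y (mem_of_mem_erase hy) (ne_of_mem_erase hy).symm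
  have hlhs : ∑ x ∈ s, ∑ y ∈ s.erase x, (f x + g y)
      = (#s - 1) * (∑ x ∈ s, f x + ∑ x ∈ s, g x) := by
    rw [sum_congr rfl fun x hx => by
      rw [sum_add_distrib, sum_const, nsmul_eq_mul, hcard x hx, sum_erase_eq_sub hx]]
    rw [sum_add_distrib, sum_sub_distrib, sum_const, nsmul_eq_mul, ← mul_sum]
    ring
  have hrhs : ∑ x ∈ s, ∑ _y ∈ s.erase x, σ = (#s - 1) * (#s * σ) := by
    rw [sum_congr rfl fun x hx => by rw [sum_const, nsmul_eq_mul, hcard x hx]]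
    rw [sum_const, nsmul_eq_mul]
    ring
  have hpos : (0 : ℝ) < #s - 1 := by
    have : (2 : ℝ) ≤ #s := by exact_mod_cast hs
    linarith
  rw [hlhs, hrhs] at hlt
  exact lt_of_mul_lt_mul_left hlt hpos.le

theorem two_mul_sum_offDiag_lt (hK : DisjointPairsBound K σ) {s : Finset ι} (hs : 4 ≤ #s) :
    2 * ∑ p ∈ s.offDiag, K p.1 p.2 < #s * (#s - 1) * σ := by
  set t : ι × ι → Finset (ι × ι) := fun p => (s \ {p.1, p.2}).offDiag with ht
  have hmem : ∀ p q, p ∈ s.offDiag ∧ q ∈ t p ↔ p ∈ t q ∧ q ∈ s.offDiag := by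
    intro p q
    simp only [ht, mem_offDiag, mem_sdiff, mem_insert, mem_singleton]
    grind
  have hcardT : ∀ p ∈ s.offDiag, #(s \ {p.1, p.2}) + 2 = #s := by
    intro p hp
    obtain ⟨h1, h2, h12⟩ := mem_offDiag.1 hp
    rw [card_sdiff_of_subset (by simp [insert_subset_iff, h1, h2]), card_pair h12]
    omega
  have hcard : ∀ p ∈ s.offDiag, (#(t p) : ℝ) = (#s - 2) * (#s - 3) := by
    intro p hp
    rw [ht, cast_card_offDiag, ← hcardT p hp]
    push_cast
    ring
  have hlt : ∑ p ∈ s.offDiag, ∑ q ∈ t p, (K p.1 p.2 + K q.1 q.2)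
      < ∑ p ∈ s.offDiag, ∑ _q ∈ t p, σ := by
    have hne : ∀ r : Finset ι, 2 ≤ #r → r.offDiag.Nonempty := fun r hr => by
      rw [← card_pos, ← Nat.cast_pos (α := ℝ), cast_card_offDiag]
      have : (2 : ℝ) ≤ #r := by exact_mod_cast hr
      nlinarith
    refine sum_lt_sum_of_nonempty (hne s (by omega)) fun p hp =>
      sum_lt_sum_of_nonempty (hne _ ?_) fun q hq => ?_
    · have := hcardT p hp
      omega
    · have hp12 := (mem_offDiag.1 hp).2.2
      simp only [ht, mem_offDiag, mem_sdiff, mem_insert, mem_singleton] at hq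
      exact hK _ _ _ _ hp12 (by grind) (by grind) (by grind) (by grind) (by grind)
  have hswap : ∑ p ∈ s.offDiag, ∑ q ∈ t p, K q.1 q.2 = ∑ q ∈ s.offDiag, ∑ _p ∈ t q, K q.1 q.2 :=
    sum_comm' hmem
  have hcount : ∀ f : ι × ι → ℝ, ∑ p ∈ s.offDiag, #(t p) * f p
      = (#s - 2) * (#s - 3) * ∑ p ∈ s.offDiag, f p := fun f => by
    rw [mul_sum]
    exact sum_congr rfl fun p hp => by rw [hcard p hp]
  simp only [sum_add_distrib, hswap, sum_const, nsmul_eq_mul, hcount, ← two_mul] at hlt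
  have hpos : (0 : ℝ) < (#s - 2) * (#s - 3) := by
    have : (4 : ℝ) ≤ #s := by exact_mod_cast hs
    nlinarith
  rw [mul_left_comm] at hlt
  rw [← cast_card_offDiag]
  exact lt_of_mul_lt_mul_left hlt hpos.le

theorem sum_sum_eq_sum_offDiag (hdiag : ∀ i, K i i = 0) (s : Finset ι) :
    ∑ x ∈ s, ∑ y ∈ s, K x y = ∑ p ∈ s.offDiag, K p.1 p.2 := by
  rw [← sum_product', ← diag_union_offDiag, sum_union (disjoint_diag_offDiag s),
    sum_eq_zero fun p hp => by rw [(mem_diag.1 hp).2, hdiag], zero_add]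

theorem sum_sum_insert (hsym : ∀ i j, K i j = K j i) (hdiag : ∀ i, K i i = 0) {a : ι}
    {s : Finset ι} (ha : a ∉ s) :
    ∑ x ∈ insert a s, ∑ y ∈ insert a s, K x y
      = ∑ x ∈ s, ∑ y ∈ s, K x y + 2 * ∑ x ∈ s, K a x := by
  simp only [sum_insert ha, sum_add_distrib, hdiag]
  rw [sum_congr rfl fun x _ => hsym x a]
  ring

variable [Fintype ι] {a b c d : ι}

theorem sum_univ_sum_univ_split (hsym : ∀ i j, K i j = K j i) (hdiag : ∀ i, K i i = 0)
    (hab : a ≠ b) (hac : a ≠ c) (had : a ≠ d) (hbc : b ≠ c) (hbd : b ≠ d) (hcd : c ≠ d) :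
    ∑ i, ∑ j, K i j = ∑ x ∈ univ \ {a, b, c, d}, ∑ y ∈ univ \ {a, b, c, d}, K x y
      + 2 * ∑ x ∈ univ \ {a, b, c, d}, (K a x + K b x + K c x + K d x)
      + 2 * (K a b + K c d) + 2 * (K a c + K a d + K b c + K b d) := by
  set O := univ \ {a, b, c, d} with hO
  have haO : a ∉ O := by simp [hO]
  have hbO : b ∉ O := by simp [hO]
  have hcO : c ∉ O := by simp [hO]
  have hdO : d ∉ O := by simp [hO]
  have huniv : (univ : Finset ι) = insert a (insert b (insert c (insert d O))) := by
    ext x; simp [hO]; tauto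
  rw [huniv, sum_sum_insert hsym hdiag (by simp [hab, hac, had, haO]),
    sum_sum_insert hsym hdiag (by simp [hbc, hbd, hbO]),
    sum_sum_insert hsym hdiag (by simp [hcd, hcO]), sum_sum_insert hsym hdiag hdO]
  simp only [sum_insert hdO, sum_insert (show c ∉ insert d O by simp [hcd, hcO]),
    sum_insert (show b ∉ insert c (insert d O) by simp [hbc, hbd, hbO]), sum_add_distrib]
  ring

theorem card_univ_sdiff_add_four
    (hab : a ≠ b) (hac : a ≠ c) (had : a ≠ d) (hbc : b ≠ c) (hbd : b ≠ d) (hcd : c ≠ d) :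
    #(univ \ {a, b, c, d}) + 4 = Fintype.card ι := by
  have h4 : #({a, b, c, d} : Finset ι) = 4 := by
    simp [card_insert_of_notMem, hab, hac, had, hbc, hbd, hcd]
  rw [card_sdiff_of_subset (subset_univ _), card_univ, ← h4,
    Nat.sub_add_cancel (card_le_univ _)]

theorem half_add_lt_of_card_ne_five (hsym : ∀ i j, K i j = K j i) (hdiag : ∀ i, K i i = 0)
    (hK : DisjointPairsBound K σ)
    (hab : a ≠ b) (hac : a ≠ c) (had : a ≠ d) (hbc : b ≠ c) (hbd : b ≠ d) (hcd : c ≠ d)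
    (hn : Fintype.card ι ≠ 5)
    (hT : σ * ((Fintype.card ι : ℝ) ^ 2 - Fintype.card ι - 6) = 2 * ∑ i, ∑ j, K i j) :
    1 / 2 * (K a b + K c d) < K a c + K a d + K b c + K b d := by
  rw [sum_univ_sum_univ_split hsym hdiag hab hac had hbc hbd hcd] at hT
  set O := univ \ {a, b, c, d} with hO
  have hP := hK a b c d hab hac had hbc hbd hcd
  have hOcard : #O + 4 = Fintype.card ι := card_univ_sdiff_add_four hab hac had hbc hbd hcd
  rcases Nat.lt_or_ge #O 2 with hsmall | hlarge
  · have hempty : O = ∅ := card_eq_zero.1 (by omega)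
    rw [hempty, ← hOcard, hempty] at hT
    norm_num at hT
    linarith
  · have hm : (#O : ℝ) + 4 = Fintype.card ι := by exact_mod_cast hOcard
    have hcross {p q : ι} (hp : p ∉ O) (hq : q ∉ O) (hpq : p ≠ q) :
        ∑ x ∈ O, K p x + ∑ x ∈ O, K q x < #O * σ :=
      sum_add_sum_lt_card_mul hlarge fun x hx y hy hxy =>
        hK p x q y (ne_of_mem_of_not_mem hx hp).symm hpq (ne_of_mem_of_not_mem hy hp).symm
          (ne_of_mem_of_not_mem hx hq) hxy (ne_of_mem_of_not_mem hy hq).symm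
    have hpair {p q : ι} (hp : p ∉ O) (hq : q ∉ O) (hpq : p ≠ q) :
        2 * (∑ x ∈ O, ∑ y ∈ O, K x y + 2 * (∑ x ∈ O, K p x + ∑ x ∈ O, K q x) + 2 * K p q)
          < (#O + 2) * (#O + 1) * σ := by
      have hpO : p ∉ insert q O := by simp [hpq, hp]
      have hcard : #(insert p (insert q O)) = #O + 2 := by
        rw [card_insert_of_notMem hpO, card_insert_of_notMem hq]
      have := two_mul_sum_offDiag_lt hK (s := insert p (insert q O)) (by omega)
      rw [← sum_sum_eq_sum_offDiag hdiag, sum_sum_insert hsym hdiag hpO,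
        sum_sum_insert hsym hdiag hq, sum_insert hq, hcard] at this
      push_cast at this
      linarith
    have hcross_ab := hcross (by simp [hO]) (by simp [hO]) hab
    have hcross_cd := hcross (by simp [hO]) (by simp [hO]) hcd
    have hpair_ab := hpair (by simp [hO]) (by simp [hO]) hab
    have hpair_cd := hpair (by simp [hO]) (by simp [hO]) hcd
    rw [← hm] at hT
    simp only [sum_add_distrib] at hT
    linarith

theorem half_add_lt_of_card_eq_five (hsym : ∀ i j, K i j = K j i) (hdiag : ∀ i, K i i = 0)
    (hK : DisjointPairsBound K σ)
    (hab : a ≠ b) (hac : a ≠ c) (had : a ≠ d) (hbc : b ≠ c) (hbd : b ≠ d) (hcd : c ≠ d)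
    (hn : Fintype.card ι = 5) (hT : 17 * σ = 2 * ∑ i, ∑ j, K i j) :
    1 / 2 * (K a b + K c d) < K a c + K a d + K b c + K b d := by
  rw [sum_univ_sum_univ_split hsym hdiag hab hac had hbc hbd hcd] at hT
  have hcard : #(univ \ {a, b, c, d}) = 1 := by
    have := card_univ_sdiff_add_four hab hac had hbc hbd hcd
    omega
  obtain ⟨x, hx⟩ := card_eq_one.1 hcard
  have hxO : x ∈ univ \ {a, b, c, d} := hx ▸ mem_singleton_self x
  simp only [mem_sdiff, mem_univ, mem_insert, mem_singleton, true_and, not_or] at hxO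
  obtain ⟨hxa, hxb, hxc, hxd⟩ := hxO
  rw [hx] at hT
  simp only [sum_singleton, hdiag] at hT
  have e : ∀ p q r, p ≠ q → p ≠ r → q ≠ r → x ≠ p → x ≠ q → x ≠ r → K p q + K r x < σ :=
    fun p q r hpq hpr hqr hxp hxq hxr => hK p q r x hpq hpr hxp.symm hqr hxq.symm hxr.symm
  linarith [hK a b c d hab hac had hbc hbd hcd,
    e a b c hab hac hbc hxa hxb hxc, e a b d hab had hbd hxa hxb hxd,
    e c d a hcd hac.symm had.symm hxc hxd hxa, e c d b hcd hbc.symm hbd.symm hxc hxd hxb,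
    e a c b hac hab hbc.symm hxa hxc hxb, e a c d hac had hcd hxa hxc hxd,
    e a d b had hab hbd.symm hxa hxd hxb, e a d c had hac hcd.symm hxa hxd hxc,
    e b c a hbc hab.symm hac.symm hxb hxc hxa, e b c d hbc hbd hcd hxb hxc hxd,
    e b d a hbd hab.symm had.symm hxb hxd hxa, e b d c hbd hbc hcd.symm hxb hxd hxc]

theorem half_add_lt_of_disjointPairsBound (hsym : ∀ i j, K i j = K j i)
    (hdiag : ∀ i, K i i = 0) (hK : DisjointPairsBound K σ)
    (hab : a ≠ b) (hac : a ≠ c) (had : a ≠ d) (hbc : b ≠ c) (hbd : b ≠ d) (hcd : c ≠ d)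
    (hT : σ * (if Fintype.card ι = 5 then 17 else (Fintype.card ι : ℝ) ^ 2 - Fintype.card ι - 6)
      = 2 * ∑ i, ∑ j, K i j) :
    1 / 2 * (K a b + K c d) < K a c + K a d + K b c + K b d := by
  split_ifs at hT with h5
  · exact half_add_lt_of_card_eq_five hsym hdiag hK hab hac had hbc hbd hcd h5 (by linarith)
  · exact half_add_lt_of_card_ne_five hsym hdiag hK hab hac had hbc hbd hcd h5 hT

end PairSums

theorem OrthonormalFrame4.orthonormal {e₁ e₂ e₃ e₄ : V} (h : OrthonormalFrame4 e₁ e₂ e₃ e₄) :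
    Orthonormal ℝ ![e₁, e₂, e₃, e₄] := by
  obtain ⟨h₁, h₂, h₃, h₄, h₁₂, h₁₃, h₁₄, h₂₃, h₂₄, h₃₄⟩ := h
  rw [orthonormal_iff_ite]
  intro i j
  fin_cases i <;> fin_cases j <;> simp <;>
    first | exact Or.inl ‹_› | assumption | (rw [real_inner_comm]; assumption)

theorem Orthonormal.orthonormalFrame4 {ι : Type*} {v : ι → V} (hv : Orthonormal ℝ v) {i j k l : ι}
    (hij : i ≠ j) (hik : i ≠ k) (hil : i ≠ l) (hjk : j ≠ k) (hjl : j ≠ l) (hkl : k ≠ l) :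
    OrthonormalFrame4 (v i) (v j) (v k) (v l) :=
  ⟨hv.1 i, hv.1 j, hv.1 k, hv.1 l, hv.2 hij, hv.2 hik, hv.2 hil, hv.2 hjk, hv.2 hjl, hv.2 hkl⟩

theorem Orthonormal.exists_orthonormalBasis_extension_embedding [FiniteDimensional ℝ V]
    {κ : Type*} {v : κ → V} (hv : Orthonormal ℝ v) :
    ∃ (u : Finset V) (c : OrthonormalBasis u ℝ V) (g : κ ↪ u), ∀ k, c (g k) = v k := by
  have hinj := hv.linearIndependent.injective
  obtain ⟨u, c, hsub, hc⟩ :=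
    ((orthonormal_subtype_range hinj).2 hv).exists_orthonormalBasis_extension
  exact ⟨u, c, ⟨fun k => ⟨v k, hsub ⟨k, rfl⟩⟩, fun k l h => hinj (congrArg Subtype.val h)⟩,
    fun k => by rw [hc]; rfl⟩

theorem sum_apply_orthonormalBasis_eq {ι κ : Type*} [Fintype ι] [Fintype κ]
    (B : V →ₗ[ℝ] V →ₗ[ℝ] ℝ) (c : OrthonormalBasis ι ℝ V) (d : OrthonormalBasis κ ℝ V) :
    ∑ i, B (c i) (c i) = ∑ k, B (d k) (d k) := by
  set T : V →ₗ[ℝ] V := ∑ k, (B (d k)).smulRight (d k)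
  have hT : ∀ x y, ⟪x, T y⟫ = B x y := fun x y => by
    conv_rhs => rw [← d.sum_repr' x]
    simp [T, inner_sum, real_inner_smul_right, real_inner_comm x, mul_comm]
  rw [← Fintype.sum_congr _ _ fun i => hT (c i) (c i),
    ← Fintype.sum_congr _ _ fun k => hT (d k) (d k),
    ← LinearMap.trace_eq_sum_inner, ← LinearMap.trace_eq_sum_inner]

theorem sum_sum_apply_orthonormalBasis_eq {ι κ : Type*} [Fintype ι] [Fintype κ]
    (R : V →ₗ[ℝ] V →ₗ[ℝ] V →ₗ[ℝ] V →ₗ[ℝ] ℝ) (c : OrthonormalBasis ι ℝ V)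
    (d : OrthonormalBasis κ ℝ V) :
    ∑ i, ∑ j, R (c i) (c j) (c i) (c j) = ∑ k, ∑ l, R (d k) (d l) (d k) (d l) :=
  -- change the basis in the 2nd/4th slots via `(X, Y) ↦ R u X u Y`,
  -- then in the 1st/3rd slots via `(X, Y) ↦ R X v Y v`
  calc ∑ i, ∑ j, R (c i) (c j) (c i) (c j)
      = ∑ i, ∑ l, R (c i) (d l) (c i) (d l) :=
        Fintype.sum_congr _ _ fun i => sum_apply_orthonormalBasis_eq ((R (c i)).flip (c i)) c d
    _ = ∑ l, ∑ i, R (c i) (d l) (c i) (d l) := sum_comm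
    _ = ∑ l, ∑ k, R (d k) (d l) (d k) (d l) :=
        Fintype.sum_congr _ _ fun l =>
          sum_apply_orthonormalBasis_eq ((R.flip (d l)).compr₂ (LinearMap.applyₗ (d l))) c d
    _ = ∑ k, ∑ l, R (d k) (d l) (d k) (d l) := sum_comm

theorem IsCurvatureTensor.apply_self_eq_zero {R : V →ₗ[ℝ] V →ₗ[ℝ] V →ₗ[ℝ] V →ₗ[ℝ] ℝ}
    (hR : IsCurvatureTensor R) (X Z W : V) : R X X Z W = 0 := by
  linarith [hR.1 X X Z W]

theorem IsCurvatureTensor.apply_swap {R : V →ₗ[ℝ] V →ₗ[ℝ] V →ₗ[ℝ] V →ₗ[ℝ] ℝ}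
    (hR : IsCurvatureTensor R) (X Y : V) : R Y X Y X = R X Y X Y := by
  rw [hR.1, hR.2.1, neg_neg]

theorem stmt_10 {V : Type*} [NormedAddCommGroup V] [InnerProductSpace ℝ V]
    (n : ℕ) (hn : 4 ≤ n) (b : OrthonormalBasis (Fin n) ℝ V)
    (R : V →ₗ[ℝ] V →ₗ[ℝ] V →ₗ[ℝ] V →ₗ[ℝ] ℝ) (hR : IsCurvatureTensor R)
    (S₀ : ℝ) (hS₀ : S₀ = (1 / ((n : ℝ) * ((n : ℝ) - 1))) *
      ∑ i : Fin n, ∑ j : Fin n, R (b i) (b j) (b i) (b j))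
    (γ : ℝ)
    (hγ : γ = if n = 5 then 20 / 17
      else (n : ℝ) * ((n : ℝ) - 1) / ((n : ℝ) ^ 2 - (n : ℝ) - 6))
    (hyp : ∀ f₁ f₂ f₃ f₄ : V, OrthonormalFrame4 f₁ f₂ f₃ f₄ →
      R f₁ f₂ f₁ f₂ + R f₃ f₄ f₃ f₄ < 2 * γ * S₀) :
    ∀ f₁ f₂ f₃ f₄ : V, OrthonormalFrame4 f₁ f₂ f₃ f₄ →
      R f₁ f₃ f₁ f₃ + R f₁ f₄ f₁ f₄ + R f₂ f₃ f₂ f₃ + R f₂ f₄ f₂ f₄ >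
        (1 / 2) * (R f₁ f₂ f₁ f₂ + R f₃ f₄ f₃ f₄) := by
  classical
  intro f₁ f₂ f₃ f₄ hf
  have : FiniteDimensional ℝ V := b.toBasis.finiteDimensional_of_finite
  obtain ⟨u, c, g, hcg⟩ := hf.orthonormal.exists_orthonormalBasis_extension_embedding
  have hcard : Fintype.card u = n := by
    rw [← Module.finrank_eq_card_basis c.toBasis, Module.finrank_eq_card_basis b.toBasis,
      Fintype.card_fin]
  set K : u → u → ℝ := fun x y => R (c x) (c y) (c x) (c y) with hKdef
  have hsym : ∀ x y, K x y = K y x := fun x y => hR.apply_swap (c y) (c x)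
  have hdiag : ∀ x, K x x = 0 := fun x => hR.apply_self_eq_zero _ _ _
  have hK : DisjointPairsBound K (2 * γ * S₀) := fun x y z w hxy hxz hxw hyz hyw hzw =>
    hyp _ _ _ _ (c.orthonormal.orthonormalFrame4 hxy hxz hxw hyz hyw hzw)
  have hn4 : (4 : ℝ) ≤ n := by exact_mod_cast hn
  have hγn : γ * (if n = 5 then 17 else (n : ℝ) ^ 2 - n - 6) = n * (n - 1) := by
    rw [hγ]
    split_ifs with h5
    · subst h5
      norm_num
    · exact div_mul_cancel₀ _ (by nlinarith)
  have hT : (n * (n - 1) : ℝ) * S₀ = ∑ x, ∑ y, K x y := by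
    rw [hS₀, sum_sum_apply_orthonormalBasis_eq R b c, ← mul_assoc,
      mul_one_div_cancel (by nlinarith), one_mul]
  have hσ : 2 * γ * S₀ * (if Fintype.card u = 5 then 17 else (Fintype.card u : ℝ) ^ 2
      - Fintype.card u - 6) = 2 * ∑ x, ∑ y, K x y := by
    rw [hcard, ← hT, ← hγn]
    ring
  have hg (i j : Fin 4) (h : i ≠ j) : g i ≠ g j := g.injective.ne h
  simpa [hKdef, hcg] using half_add_lt_of_disjointPairsBound hsym hdiag hK (hg 0 1 (by decide))
    (hg 0 2 (by decide)) (hg 0 3 (by decide)) (hg 1 2 (by decide)) (hg 1 3 (by decide))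
    (hg 2 3 (by decide)) hσ
end
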